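/- arXiv:1910.13044 — 2 statements merged into one kernel-verified Lean document; each statement's English description precedes it below -/
import Mathlib

section
/- Let G be a finitely generated (countable discrete) group. Then the index map C(G) → ℕ̄ sending a subgroup H to its index [G : H] (an element of ℕ if the index is finite, and ∞ otherwise) is continuous, where ℕ̄ = ℕ ∪ {∞} is the one-point compactification of ℕ. -/
open OnePoint

/-- The Chabauty space of a topological group `G`: the set of closed subgroups of `G`. -/
def ChabautySpace (G : Type*) [Group G] [TopologicalSpace G] : Type _ :=
  {H : Subgroup G // IsClosed (H : Set G)}

/-- The Chabauty topology on the space of closed subgroups, generated by the sets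
`O_K = {H | H ∩ K = ∅}` for `K` compact and `O'_U = {H | H ∩ U ≠ ∅}` for `U` open. -/
instance ChabautySpace.instTopologicalSpace (G : Type*) [Group G] [TopologicalSpace G] :
    TopologicalSpace (ChabautySpace G) :=
  TopologicalSpace.generateFrom
    ({S | ∃ K : Set G, IsCompact K ∧ S = {H : ChabautySpace G | (H.1 : Set G) ∩ K = ∅}} ∪
     {S | ∃ U : Set G, IsOpen U ∧ S = {H : ChabautySpace G | ((H.1 : Set G) ∩ U).Nonempty}})

/-!
If `T ⊆ G` is finite, saying that the elements of `T` lie in pairwise distinct cosets of `H` is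
saying that `H` avoids the finite set `T⁻¹T \ {1}`, an open Chabauty condition. Hence
`{H | [G:H] ≥ n}` (infinite index included) is open, which gives continuity at `∞`.
If `[G:H] = n` is finite, then `H` is finitely generated (Schreier), so `H ≤ H'` is an open
condition on `H'`; such `H'` have index dividing `n`, and together with `[G:H'] ≥ n` this shows
that the fibre `{[G:H'] = n}` is open.
-/

open scoped Pointwise

theorem QuotientGroup.injOn_mk_iff_disjoint {G : Type*} [Group G] (H : Subgroup G) (T : Set G) :
    Set.InjOn (QuotientGroup.mk : G → G ⧸ H) T ↔
      Disjoint (H : Set G) ((T⁻¹ * T) \ {1}) := by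
  simp only [Set.InjOn, QuotientGroup.eq, Set.disjoint_left, Set.mem_sdiff, Set.mem_mul,
    Set.mem_inv, Set.mem_singleton_iff, SetLike.mem_coe, not_and, not_not]
  constructor
  · rintro h x hx ⟨a, ha, b, hb, rfl⟩
    rw [← h ha hb (by simpa using hx), mul_inv_cancel]
  · intro h a ha b hb hab
    simpa [inv_mul_eq_one] using h hab ⟨a⁻¹, by simpa using ha, b, hb, rfl⟩

theorem Subgroup.exists_finset_injOn_mk_iff {G : Type*} [Group G] (H : Subgroup G) (n : ℕ) :
    (∃ T : Finset G, T.card = n ∧ Set.InjOn (QuotientGroup.mk : G → G ⧸ H) T) ↔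
      H.index = 0 ∨ n ≤ H.index := by
  classical
  constructor
  · rintro ⟨T, rfl, hT⟩
    refine or_iff_not_imp_left.mpr fun h0 => ?_
    have := index_ne_zero_iff_finite.mp h0
    have := Fintype.ofFinite (G ⧸ H)
    rw [index_eq_card, Nat.card_eq_fintype_card]
    exact Finset.card_le_card_of_injOn _ (fun _ _ => Finset.mem_univ _) hT
  · intro h
    have hcard : (n : Cardinal) ≤ Cardinal.mk (G ⧸ H) := by
      rcases eq_or_ne H.index 0 with h0 | h0
      · have := index_eq_zero_iff_infinite.mp h0
        exact Cardinal.natCast_lt_aleph0.le.trans (Cardinal.infinite_iff.mp this)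
      · have := index_ne_zero_iff_finite.mp h0
        rw [← Nat.cast_card, ← index_eq_card]
        exact_mod_cast h.resolve_left h0
    obtain ⟨s, hs⟩ := Cardinal.exists_finset_eq_card hcard
    refine ⟨s.image Quotient.out, ?_, ?_⟩
    · rw [Finset.card_image_of_injective _ Quotient.out_injective, hs]
    · intro a ha b hb hab
      obtain ⟨x, -, rfl⟩ := Finset.mem_image.mp ha
      obtain ⟨y, -, rfl⟩ := Finset.mem_image.mp hb
      simp_all

namespace ChabautySpace

variable {G : Type*} [Group G] [TopologicalSpace G]

theorem isOpen_setOf_disjoint {K : Set G} (hK : IsCompact K) :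
    IsOpen {H : ChabautySpace G | Disjoint (H.1 : Set G) K} := by
  simp_rw [Set.disjoint_iff_inter_eq_empty]
  exact .basic _ (.inl ⟨K, hK, rfl⟩)

theorem isOpen_setOf_inter_nonempty {U : Set G} (hU : IsOpen U) :
    IsOpen {H : ChabautySpace G | ((H.1 : Set G) ∩ U).Nonempty} :=
  .basic _ (.inr ⟨U, hU, rfl⟩)

theorem isOpen_setOf_mem [DiscreteTopology G] (g : G) :
    IsOpen {H : ChabautySpace G | g ∈ H.1} := by
  simpa using isOpen_setOf_inter_nonempty (isOpen_discrete {g})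

theorem isOpen_setOf_le [DiscreteTopology G] {K : Subgroup G} (hK : K.FG) :
    IsOpen {H : ChabautySpace G | K ≤ H.1} := by
  obtain ⟨S, rfl⟩ := hK
  have : {H : ChabautySpace G | Subgroup.closure S ≤ H.1} = ⋂ s ∈ S, {H | s ∈ H.1} := by
    ext H
    simp [Subgroup.closure_le, Set.subset_def]
  exact this ▸ isOpen_biInter_finset fun s _ => isOpen_setOf_mem s

theorem isOpen_setOf_injOn_mk {T : Set G} (hT : T.Finite) :
    IsOpen {H : ChabautySpace G | Set.InjOn (QuotientGroup.mk : G → G ⧸ H.1) T} := by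
  simp_rw [QuotientGroup.injOn_mk_iff_disjoint]
  exact isOpen_setOf_disjoint ((hT.inv.mul hT).sdiff).isCompact

theorem isOpen_setOf_index_eq_zero_or_le (n : ℕ) :
    IsOpen {H : ChabautySpace G | H.1.index = 0 ∨ n ≤ H.1.index} := by
  have : {H : ChabautySpace G | H.1.index = 0 ∨ n ≤ H.1.index} =
      ⋃ (T : Finset G) (_ : T.card = n),
        {H | Set.InjOn (QuotientGroup.mk : G → G ⧸ H.1) T} := by
    ext H
    simp [← Subgroup.exists_finset_injOn_mk_iff]
  exact this ▸ isOpen_iUnion fun T =>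
    isOpen_iUnion fun _ => isOpen_setOf_injOn_mk T.finite_toSet

theorem isOpen_setOf_index_eq [DiscreteTopology G] [Group.FG G] {n : ℕ} (hn : n ≠ 0) :
    IsOpen {H : ChabautySpace G | H.1.index = n} := by
  refine isOpen_iff_forall_mem_open.mpr fun H (hH : H.1.index = n) => ?_
  have : H.1.FiniteIndex := ⟨hH ▸ hn⟩
  refine ⟨{H' | H.1 ≤ H'.1} ∩ {H' | H'.1.index = 0 ∨ n ≤ H'.1.index}, ?_,
    (isOpen_setOf_le ?_).inter (isOpen_setOf_index_eq_zero_or_le n),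
    Set.mem_inter (le_refl H.1) (.inr hH.ge)⟩
  · rintro H' ⟨hle, hH'⟩
    have hdvd : H'.1.index ∣ n := hH ▸ Subgroup.index_dvd_of_le hle
    have h0 : H'.1.index ≠ 0 := fun h => hn (zero_dvd_iff.mp (h ▸ hdvd))
    exact (Nat.le_of_dvd (Nat.pos_of_ne_zero hn) hdvd).antisymm (hH'.resolve_left h0)
  · exact (Group.fg_iff_subgroup_fg H.1).mp inferInstance

end ChabautySpace

theorem OnePoint.continuous_of_isOpen_preimage_nat {X : Type*} [TopologicalSpace X]
    {f : X → OnePoint ℕ} (h_coe : ∀ n : ℕ, IsOpen (f ⁻¹' {(n : OnePoint ℕ)}))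
    (h_infty : ∀ N : ℕ, IsOpen (f ⁻¹' ((↑) '' Set.Iic N)ᶜ)) : Continuous f := by
  refine continuous_def.mpr fun U hU => isOpen_iff_forall_mem_open.mpr fun x hx => ?_
  induction hfx : f x using OnePoint.rec with
  | infty =>
    rw [Set.mem_preimage, hfx] at hx
    obtain ⟨N, hN⟩ := ((isOpen_iff_of_mem hx).mp hU).2.finite_of_discrete.bddAbove
    have hU_tail : ((↑) '' Set.Iic N)ᶜ ⊆ U := by
      rintro (_ | m) hm
      · exact hx
      · by_contra hmU
        exact hm ⟨m, hN hmU, rfl⟩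
    exact ⟨_, Set.preimage_mono hU_tail, h_infty N, by simp [hfx]⟩
  | coe n => exact ⟨_, fun y hy => by simp_all, h_coe n, hfx⟩

theorem chabauty_index_continuous_general
    (G : Type*) [Group G] [TopologicalSpace G] [DiscreteTopology G]
    [Group.FG G] :
    Continuous (fun H : ChabautySpace G =>
      if H.1.index = 0 then (∞ : OnePoint ℕ) else (H.1.index : OnePoint ℕ)) := by
  refine OnePoint.continuous_of_isOpen_preimage_nat (fun n => ?_) (fun N => ?_)
  · rcases eq_or_ne n 0 with rfl | hn
    · convert isOpen_empty
      ext H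
      by_cases h : H.1.index = 0 <;> simp [h]
    · convert ChabautySpace.isOpen_setOf_index_eq (G := G) hn using 1
      ext H
      by_cases h : H.1.index = 0 <;> simp [h, hn.symm]
  · convert ChabautySpace.isOpen_setOf_index_eq_zero_or_le (G := G) (N + 1) using 1
    ext H
    by_cases h : H.1.index = 0 <;> simp [h]

/-- For a finitely generated (countable discrete) group `G`, the index map
`C(G) → ℕ̄ = ℕ ∪ {∞}`, sending `H` to `[G:H]` if finite and to `∞` otherwise,
is continuous (recall `Subgroup.index H = 0` encodes infinite index). -/
theorem chabauty_index_continuous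
    (G : Type*) [Group G] [TopologicalSpace G] [DiscreteTopology G] [Countable G]
    [Group.FG G] :
    Continuous (fun H : ChabautySpace G =>
      if H.1.index = 0 then (∞ : OnePoint ℕ) else (H.1.index : OnePoint ℕ)) :=
  chabauty_index_continuous_general G
end

section
/- Let p be a prime, k ≥ 1, and G_{p,k} = C_{p^∞} × C_k × 𝕋, where C_{p^∞} is the Prüfer p-group with the discrete topology, C_k is the cyclic group of order k with the discrete topology, and 𝕋 is the circle group. For a finite subgroup F of C_k × 𝕋, let q_F : G_{p,k} → G_{p,k}/({1} × F) denote the quotient map, and identify G_{p,k}/({1} × F) with C_{p^∞} × ((C_k × 𝕋)/F). For a continuous homomorphism f : C_{p^∞} → (C_k × 𝕋)/F, set H_{F,f} := q_F^{-1}({(w, f(w)) : w ∈ C_{p^∞}}). Then H_{F,f} is an infinite discrete (closed) subgroup of G_{p,k}, and conversely every infinite discrete closed subgroup of G_{p,k} equals H_{F,f} for some finite subgroup F of C_k × 𝕋 and some continuous homomorphism f : C_{p^∞} → (C_k × 𝕋)/F. -/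
/-- The subgroup `C_n` of `n`-th roots of unity in the circle group `𝕋`. -/
noncomputable def circleRoots (n : ℕ) : Subgroup Circle where
  carrier := {z | z ^ n = 1}
  one_mem' := one_pow n
  mul_mem' := by
    intro a b ha hb
    simp only [Set.mem_setOf_eq] at *
    rw [mul_pow, ha, hb, mul_one]
  inv_mem' := by
    intro a ha
    simp only [Set.mem_setOf_eq] at *
    rw [inv_pow, ha, inv_one]

/-- The subgroup of all `p`-power roots of unity in the circle group `𝕋`. -/
noncomputable def pruferSubgroup (p : ℕ) : Subgroup Circle where
  carrier := {z | ∃ ℓ : ℕ, z ^ p ^ ℓ = 1}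
  one_mem' := ⟨0, one_pow _⟩
  mul_mem' := by
    rintro a b ⟨la, ha⟩ ⟨lb, hb⟩
    refine ⟨la + lb, ?_⟩
    rw [mul_pow, pow_add, pow_mul, ha, one_pow, mul_comm (p ^ la), pow_mul, hb, one_pow,
      one_mul]
  inv_mem' := by
    rintro a ⟨l, h⟩
    exact ⟨l, by rw [inv_pow, h, inv_one]⟩

/-- The Prüfer `p`-group `C_{p^∞}`: the group of all `p`-power roots of unity in `𝕋`,
endowed with the *discrete* topology. -/
def Prufer (p : ℕ) : Type := ↥(pruferSubgroup p)

noncomputable instance (p : ℕ) : CommGroup (Prufer p) := inferInstanceAs (CommGroup ↥(pruferSubgroup p))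

instance (p : ℕ) : TopologicalSpace (Prufer p) := ⊥

instance (p : ℕ) : DiscreteTopology (Prufer p) := ⟨rfl⟩

instance (p : ℕ) : IsTopologicalGroup (Prufer p) where
  continuous_mul := continuous_of_discreteTopology
  continuous_inv := continuous_of_discreteTopology

/-- The graph of a group homomorphism `f : P →* Q`, as a subgroup of `P × Q`. -/
def MonoidHom.graphSubgroup {P Q : Type*} [Group P] [Group Q] (f : P →* Q) :
    Subgroup (P × Q) where
  carrier := {x | x.2 = f x.1}
  one_mem' := by simp
  mul_mem' := by
    rintro x y hx hy
    simp only [Set.mem_setOf_eq, Prod.fst_mul, Prod.snd_mul, map_mul] at *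
    rw [hx, hy]
  inv_mem' := by
    rintro x hx
    simp only [Set.mem_setOf_eq, Prod.fst_inv, Prod.snd_inv, map_inv] at *
    rw [hx]

/-!
Write `K = C_k × 𝕋`, a compact group. A closed discrete subgroup `H ≤ C_{p^∞} × K` meets the
compact fibre `{1} × K` in a finite group `{1} × F`, and its image in `C_{p^∞}` is infinite, since
otherwise `H` would be a closed discrete subset of the compact set `(image) × K`. An infinite
subgroup of `C_{p^∞}` contains elements of arbitrarily large order `p^n`, and an element of order
`p^n` generates all `p^n`-th roots of unity, so it is everything. Hence `H` projects onto
`C_{p^∞}` with fibres the cosets of `F`, i.e. `H` is the preimage of the graph of a homomorphism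
`C_{p^∞} → K ⧸ F`. Conversely such a preimage meets the open set `{1} × K` only in `{1} × F`,
which is finite, so it is discrete.
-/

theorem Circle.finite_setOf_pow_eq_one {n : ℕ} (hn : n ≠ 0) : {z : Circle | z ^ n = 1}.Finite := by
  refine ((Polynomial.nthRootsFinset n (1 : ℂ)).finite_toSet.preimage
    (f := ((↑) : Circle → ℂ)) Circle.coe_injective.injOn).subset
      fun (z : Circle) (hz : z ^ n = 1) => ?_
  change (z : ℂ) ∈ Polynomial.nthRootsFinset n (1 : ℂ)
  rw [Polynomial.mem_nthRootsFinset (Nat.pos_of_ne_zero hn), ← Circle.coe_pow, hz, Circle.coe_one]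

theorem Circle.mem_zpowers_of_pow_orderOf_eq_one {a w : Circle} (ha : 0 < orderOf a)
    (hw : w ^ orderOf a = 1) : w ∈ Subgroup.zpowers a := by
  have : NeZero (orderOf a) := ⟨ha.ne'⟩
  have hζ : IsPrimitiveRoot (a : ℂ) (orderOf a) :=
    (IsPrimitiveRoot.orderOf a).map_of_injective (f := Circle.coeHom) Circle.coe_injective
  obtain ⟨i, -, hi⟩ := hζ.eq_pow_of_pow_eq_one (ξ := (w : ℂ)) (by
    rw [← Circle.coe_pow, hw, Circle.coe_one])
  rw [← Circle.coe_pow] at hi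
  exact Circle.coe_injective hi ▸ Subgroup.npow_mem_zpowers a i

theorem isClosed_circleRoots (n : ℕ) : IsClosed (circleRoots n : Set Circle) :=
  isClosed_eq (continuous_pow n) continuous_const

instance (n : ℕ) : CompactSpace (circleRoots n) :=
  isCompact_iff_compactSpace.mp (isClosed_circleRoots n).isCompact

namespace Prufer

theorem infinite {p : ℕ} (hp : 1 < p) : Infinite (Prufer p) := by
  refine not_finite_iff_infinite.mp fun _ => ?_
  set N := Nat.card (Prufer p)
  have : NeZero (p ^ N) := ⟨pow_ne_zero N (by omega)⟩
  obtain ⟨ζ, hζ⟩ := HasEnoughRootsOfUnity.exists_primitiveRoot Circle (p ^ N)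
  have hζ_mem : ζ ∈ pruferSubgroup p := ⟨N, hζ.pow_eq_one⟩
  have : p ^ N ≤ N := calc
    p ^ N = orderOf (⟨ζ, hζ_mem⟩ : Prufer p) := by rw [Subgroup.orderOf_mk, hζ.eq_orderOf]
    _ ≤ N := orderOf_le_card (G := Prufer p)
  exact (Nat.lt_pow_self hp).not_ge this

theorem eq_top_of_infinite {p : ℕ} (hp : p.Prime) {A : Subgroup (Prufer p)}
    (hA : (A : Set (Prufer p)).Infinite) : A = ⊤ := by
  refine eq_top_iff.mpr fun w _ => ?_
  obtain ⟨ℓ, hw⟩ := w.2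
  have hfin : {x : Prufer p | x.val ^ p ^ ℓ = 1}.Finite :=
    (Circle.finite_setOf_pow_eq_one (pow_ne_zero ℓ hp.ne_zero)).preimage
      Subtype.val_injective.injOn
  obtain ⟨a, haA, ha⟩ := (hA.sdiff hfin).nonempty
  obtain ⟨m, ham⟩ := a.2
  obtain ⟨n, -, hn⟩ := (Nat.dvd_prime_pow hp).mp (orderOf_dvd_of_pow_eq_one ham)
  have hℓn : ℓ ≤ n := by
    by_contra h
    exact ha (orderOf_dvd_iff_pow_eq_one.mp (hn ▸ pow_dvd_pow p (by omega)))
  obtain ⟨j, hj⟩ := Circle.mem_zpowers_of_pow_orderOf_eq_one (hn ▸ pow_pos hp.pos n) (by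
    rw [hn, ← Nat.sub_add_cancel hℓn, pow_add, pow_mul', hw, one_pow])
  exact (Subtype.ext hj : a ^ j = w) ▸ A.zpow_mem haA j

end Prufer

namespace MonoidHom

variable {P Q : Type*} [Group P] [CommGroup Q] {F : Subgroup Q}

/-- The subgroup `H_{F,f} = q_F⁻¹(graph f)` of `P × Q`, where `q_F = id × (Q → Q ⧸ F)`. -/
def graphPreimage (f : P →* Q ⧸ F) : Subgroup (P × Q) :=
  f.graphSubgroup.comap ((MonoidHom.id P).prodMap (QuotientGroup.mk' F))

@[simp]
theorem mem_graphPreimage {f : P →* Q ⧸ F} {x : P × Q} :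
    x ∈ f.graphPreimage ↔ (x.2 : Q ⧸ F) = f x.1 :=
  Iff.rfl

theorem comap_inr_graphPreimage (f : P →* Q ⧸ F) :
    f.graphPreimage.comap (MonoidHom.inr P Q) = F := by
  ext s
  simpa [eq_comm] using QuotientGroup.eq_one_iff s

theorem map_fst_graphPreimage (f : P →* Q ⧸ F) :
    f.graphPreimage.map (MonoidHom.fst P Q) = ⊤ := by
  refine eq_top_iff.mpr fun w _ => ?_
  obtain ⟨y, hy⟩ := QuotientGroup.mk_surjective (f w)
  exact ⟨(w, y), mem_graphPreimage.mpr hy, rfl⟩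

theorem infinite_graphPreimage [Infinite P] (f : P →* Q ⧸ F) :
    (f.graphPreimage : Set (P × Q)).Infinite := by
  have h : Prod.fst '' (f.graphPreimage : Set (P × Q)) = Set.univ := by
    rw [← MonoidHom.coe_fst, ← Subgroup.coe_map, map_fst_graphPreimage, Subgroup.coe_top]
  exact Set.Infinite.of_image _ (h ▸ Set.infinite_univ)

theorem isClosed_graphPreimage [TopologicalSpace P] [TopologicalSpace Q] [IsTopologicalGroup Q]
    (hF : IsClosed (F : Set Q)) {f : P →* Q ⧸ F} (hf : Continuous f) :
    IsClosed (f.graphPreimage : Set (P × Q)) :=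
  have : IsClosed (F : Set Q) := hF -- the instance making `Q ⧸ F` Hausdorff
  isClosed_eq (QuotientGroup.continuous_mk.comp continuous_snd) (hf.comp continuous_fst)

end MonoidHom

theorem Subgroup.exists_eq_graphPreimage {P Q : Type*} [Group P] [CommGroup Q]
    {H : Subgroup (P × Q)} (hH : H.map (MonoidHom.fst P Q) = ⊤) :
    ∃ f : P →* Q ⧸ H.comap (MonoidHom.inr P Q), H = f.graphPreimage := by
  set F := H.comap (MonoidHom.inr P Q)
  let π : H →* P := (MonoidHom.fst P Q).comp H.subtype
  have hπ : Function.Surjective π := fun w => by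
    obtain ⟨x, hx, rfl⟩ := hH ▸ Subgroup.mem_top w
    exact ⟨⟨x, hx⟩, rfl⟩
  let g : H →* Q ⧸ F := (QuotientGroup.mk' F).comp ((MonoidHom.snd P Q).comp H.subtype)
  have hker : π.ker ≤ g.ker := fun x (hx : x.1.1 = 1) => by
    have : (1, x.1.2) ∈ H := hx ▸ x.2
    exact (QuotientGroup.eq_one_iff _).mpr this
  set f := π.liftOfSurjective hπ ⟨g, hker⟩
  have hf : ∀ x : H, f x.1.1 = x.1.2 := π.liftOfRightInverse_comp_apply _ _ ⟨g, hker⟩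
  refine ⟨f, le_antisymm (fun x hx => (hf ⟨x, hx⟩).symm) fun ⟨w, y⟩ hwy => ?_⟩
  obtain ⟨⟨⟨w, y'⟩, hwy'⟩, rfl⟩ := hπ w
  have hF : (1, y'⁻¹ * y) ∈ H := QuotientGroup.eq.mp <|
    (hf ⟨_, hwy'⟩).symm.trans (MonoidHom.mem_graphPreimage.mp hwy).symm
  simpa [π] using H.mul_mem hwy' hF

namespace Subgroup

variable {P K : Type*} [Group P] [Group K] [TopologicalSpace P] [TopologicalSpace K]
  {H : Subgroup (P × K)}

theorem discreteTopology_of_finite_comap_inr [DiscreteTopology P] [T1Space K]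
    [IsTopologicalGroup P] [IsTopologicalGroup K]
    (hH : (H.comap (MonoidHom.inr P K) : Set K).Finite) : DiscreteTopology H := by
  apply discreteTopology_of_isOpen_singleton_one
  set S := (H.comap (MonoidHom.inr P K) : Set K) \ {1}
  have hU : IsOpen (({1} : Set P) ×ˢ Sᶜ) :=
    (isOpen_discrete _).prod (hH.sdiff.isClosed.isOpen_compl)
  convert hU.preimage continuous_subtype_val
  ext ⟨⟨w, s⟩, hws⟩
  simp only [Set.mem_singleton_iff, Set.mem_preimage, Set.mem_prod, Set.mem_compl_iff, S,
    Set.mem_sdiff, SetLike.mem_coe, mem_comap, MonoidHom.inr_apply, not_and_not_right]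
  constructor
  · intro h
    obtain ⟨rfl, rfl⟩ := Prod.ext_iff.mp (congrArg Subtype.val h)
    exact ⟨rfl, fun _ => rfl⟩
  · rintro ⟨rfl, hs⟩
    exact Subtype.ext (Prod.ext rfl (hs hws))

theorem finite_comap_inr_of_discreteTopology [T1Space P] [CompactSpace K]
    (hc : IsClosed (H : Set (P × K))) [DiscreteTopology H] :
    (H.comap (MonoidHom.inr P K) : Set K).Finite := by
  have hfin : ((H : Set (P × K)) ∩ {1} ×ˢ Set.univ).Finite :=
    ((isCompact_singleton.prod isCompact_univ).inter_left hc).finite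
      ((isDiscrete_iff_discreteTopology.mpr ‹_›).mono Set.inter_subset_left)
  exact (hfin.preimage (Prod.mk_right_injective 1).injOn).subset fun s hs => ⟨hs, rfl, trivial⟩

theorem infinite_map_fst_of_discreteTopology [CompactSpace K]
    (hc : IsClosed (H : Set (P × K))) [DiscreteTopology H] (hi : (H : Set (P × K)).Infinite) :
    (H.map (MonoidHom.fst P K) : Set P).Infinite := fun hfin =>
  hi <| ((hfin.isCompact.prod isCompact_univ).inter_left hc).finite
    ((isDiscrete_iff_discreteTopology.mpr ‹_›).mono Set.inter_subset_left) |>.subset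
    fun x hx => ⟨hx, ⟨x, hx, rfl⟩, trivial⟩

end Subgroup

theorem infinite_discrete_subgroups_eq_graphs_general (p k : ℕ) (hp : p.Prime) :
    (∀ F : Subgroup (↥(circleRoots k) × Circle),
      (F : Set (↥(circleRoots k) × Circle)).Finite →
      ∀ f : Prufer p →* (↥(circleRoots k) × Circle) ⧸ F, Continuous f →
        ((Subgroup.comap ((MonoidHom.id (Prufer p)).prodMap (QuotientGroup.mk' F))
            f.graphSubgroup : Set (Prufer p × ↥(circleRoots k) × Circle)).Infinite ∧
        DiscreteTopology
          (Subgroup.comap ((MonoidHom.id (Prufer p)).prodMap (QuotientGroup.mk' F))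
            f.graphSubgroup) ∧
        IsClosed (Subgroup.comap ((MonoidHom.id (Prufer p)).prodMap (QuotientGroup.mk' F))
            f.graphSubgroup : Set (Prufer p × ↥(circleRoots k) × Circle)))) ∧
    (∀ H : Subgroup (Prufer p × ↥(circleRoots k) × Circle),
      IsClosed (H : Set (Prufer p × ↥(circleRoots k) × Circle)) →
      (H : Set (Prufer p × ↥(circleRoots k) × Circle)).Infinite →
      DiscreteTopology H →
        ∃ F : Subgroup (↥(circleRoots k) × Circle),
          (F : Set (↥(circleRoots k) × Circle)).Finite ∧
          ∃ f : Prufer p →* (↥(circleRoots k) × Circle) ⧸ F, Continuous f ∧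
            H = Subgroup.comap ((MonoidHom.id (Prufer p)).prodMap (QuotientGroup.mk' F))
              f.graphSubgroup) := by
  have := Prufer.infinite hp.one_lt
  refine ⟨fun F hF f hf => ⟨f.infinite_graphPreimage, ?_, f.isClosed_graphPreimage hF.isClosed hf⟩,
    fun H hc hi hd => ?_⟩
  · exact Subgroup.discreteTopology_of_finite_comap_inr (H := f.graphPreimage)
      (by rwa [f.comap_inr_graphPreimage])
  · obtain ⟨f, hf⟩ := H.exists_eq_graphPreimage
      (Prufer.eq_top_of_infinite hp (H.infinite_map_fst_of_discreteTopology hc hi))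
    exact ⟨_, H.finite_comap_inr_of_discreteTopology hc, f, continuous_of_discreteTopology, hf⟩

/-- In `G_{p,k} = C_{p^∞} × C_k × 𝕋`, for every finite subgroup `F ≤ C_k × 𝕋` and every
continuous homomorphism `f : C_{p^∞} → (C_k × 𝕋)/F`, the subgroup
`H_{F,f} = q_F⁻¹(Graph f)` is an infinite discrete closed subgroup, and conversely every
infinite discrete closed subgroup of `G_{p,k}` is of this form. Here
`q_F : G_{p,k} → C_{p^∞} × ((C_k × 𝕋)/F)` is the quotient map by `{1} × F`. -/
theorem infinite_discrete_subgroups_eq_graphs (p k : ℕ) (hp : p.Prime) (hk : 1 ≤ k) :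
    (∀ F : Subgroup (↥(circleRoots k) × Circle),
      (F : Set (↥(circleRoots k) × Circle)).Finite →
      ∀ f : Prufer p →* (↥(circleRoots k) × Circle) ⧸ F, Continuous f →
        ((Subgroup.comap ((MonoidHom.id (Prufer p)).prodMap (QuotientGroup.mk' F))
            f.graphSubgroup : Set (Prufer p × ↥(circleRoots k) × Circle)).Infinite ∧
        DiscreteTopology
          (Subgroup.comap ((MonoidHom.id (Prufer p)).prodMap (QuotientGroup.mk' F))
            f.graphSubgroup) ∧
        IsClosed (Subgroup.comap ((MonoidHom.id (Prufer p)).prodMap (QuotientGroup.mk' F))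
            f.graphSubgroup : Set (Prufer p × ↥(circleRoots k) × Circle)))) ∧
    (∀ H : Subgroup (Prufer p × ↥(circleRoots k) × Circle),
      IsClosed (H : Set (Prufer p × ↥(circleRoots k) × Circle)) →
      (H : Set (Prufer p × ↥(circleRoots k) × Circle)).Infinite →
      DiscreteTopology H →
        ∃ F : Subgroup (↥(circleRoots k) × Circle),
          (F : Set (↥(circleRoots k) × Circle)).Finite ∧
          ∃ f : Prufer p →* (↥(circleRoots k) × Circle) ⧸ F, Continuous f ∧
            H = Subgroup.comap ((MonoidHom.id (Prufer p)).prodMap (QuotientGroup.mk' F))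
              f.graphSubgroup) :=
  infinite_discrete_subgroups_eq_graphs_general p k hp
end
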